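/- Suppose r, Ω, ψ satisfy the toroidally symmetric Einstein–Klein-Gordon system (EKG1)–(EKG5) on U. Then the final renormalised Hawking mass ϖ = (2rᵤrᵥr/Ω²)e^{4πgψ²} + r³/(2l²) satisfies ∂ᵤϖ = −(8πr²rᵥ/Ω²)(∇̃ᵤψ)²e^{4πgψ²} + (4πg²rᵤ/r)ϖψ² + (rᵤr²/l²)f(ψ²) and ∂ᵥϖ = −(8πr²rᵤ/Ω²)(∇̃ᵥψ)²e^{4πgψ²} + (4πg²rᵥ/r)ϖψ² + (rᵥr²/l²)f(ψ²), where f(x) = e^{4πgx}(4πax − 3/2) − 2πg²x + 3/2. -/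

import Mathlib

/-!
Differentiating `ϖ` in `u` produces `r_uu`, `r_uv` and `Ω_u`. The Raychaudhuri equation (EKG1)
expresses `r_uu` through `Ω_u`, and the wave equation (EKG3) expresses `r_uv`; after these
substitutions the `Ω_u` terms cancel and what remains is an algebraic identity. The `v`-equation
is the `u`-equation for the fields reflected by `(u, v) ↦ (v, u)`, which exchanges (EKG1) with
(EKG2) and, by the symmetry of mixed partials, maps (EKG3) to itself.
-/

/-- Partial derivative in the first (`u`) coordinate. -/
noncomputable def pdu (f : ℝ × ℝ → ℝ) (p : ℝ × ℝ) : ℝ := deriv (fun u => f (u, p.2)) p.1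

/-- Partial derivative in the second (`v`) coordinate. -/
noncomputable def pdv (f : ℝ × ℝ → ℝ) (p : ℝ × ℝ) : ℝ := deriv (fun v => f (p.1, v)) p.2

/-- The final renormalised Hawking mass `ϖ = (2rᵤrᵥr/Ω²)e^{4πgψ²} + r³/(2l²)`. -/
noncomputable def varpi (l g : ℝ) (r Ω ψ : ℝ × ℝ → ℝ) (q : ℝ × ℝ) : ℝ :=
  2 * pdu r q * pdv r q * r q / (Ω q) ^ 2 * Real.exp (4 * Real.pi * g * (ψ q) ^ 2)
    + (r q) ^ 3 / (2 * l ^ 2)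

/-- The function `f(x) = e^{4πgx}(4πax − 3/2) − 2πg²x + 3/2`. -/
noncomputable def fKG (a g x : ℝ) : ℝ :=
  Real.exp (4 * Real.pi * g * x) * (4 * Real.pi * a * x - 3 / 2)
    - 2 * Real.pi * g ^ 2 * x + 3 / 2

open Filter Topology

section PartialDerivatives

variable {f : ℝ × ℝ → ℝ} {p : ℝ × ℝ}

theorem hasDerivAt_pdu (hf : DifferentiableAt ℝ f p) :
    HasDerivAt (fun u => f (u, p.2)) (pdu f p) p.1 :=
  (hf.comp p.1 (differentiableAt_id.prodMk (differentiableAt_const _))).hasDerivAt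

theorem hasDerivAt_pdv (hf : DifferentiableAt ℝ f p) :
    HasDerivAt (fun v => f (p.1, v)) (pdv f p) p.2 :=
  (hf.comp p.2 ((differentiableAt_const _).prodMk differentiableAt_id)).hasDerivAt

theorem pdu_eq_fderiv (hf : DifferentiableAt ℝ f p) : pdu f p = fderiv ℝ f p (1, 0) := by
  have hline : HasDerivAt (fun u : ℝ => (u, p.2)) ((1 : ℝ), (0 : ℝ)) p.1 :=
    (hasDerivAt_id p.1).prodMk (hasDerivAt_const _ _)
  exact (hasDerivAt_pdu hf).unique (hf.hasFDerivAt.comp_hasDerivAt_of_eq p.1 hline rfl)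

theorem pdv_eq_fderiv (hf : DifferentiableAt ℝ f p) : pdv f p = fderiv ℝ f p (0, 1) := by
  have hline : HasDerivAt (fun v : ℝ => (p.1, v)) ((0 : ℝ), (1 : ℝ)) p.2 :=
    (hasDerivAt_const _ _).prodMk (hasDerivAt_id p.2)
  exact (hasDerivAt_pdv hf).unique (hf.hasFDerivAt.comp_hasDerivAt_of_eq p.2 hline rfl)

theorem pdu_comp_swap : pdu (f ∘ Prod.swap) = pdv f ∘ Prod.swap := rfl

theorem pdv_comp_swap : pdv (f ∘ Prod.swap) = pdu f ∘ Prod.swap := rfl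

theorem ContDiffAt.eventually_differentiableAt (hf : ContDiffAt ℝ 2 f p) :
    ∀ᶠ q in 𝓝 p, DifferentiableAt ℝ f q :=
  (hf.eventually (by simp)).mono fun _ hq => hq.differentiableAt two_ne_zero

theorem ContDiffAt.pdu_eventuallyEq (hf : ContDiffAt ℝ 2 f p) :
    pdu f =ᶠ[𝓝 p] fun q => fderiv ℝ f q (1, 0) :=
  hf.eventually_differentiableAt.mono fun _ => pdu_eq_fderiv

theorem ContDiffAt.pdv_eventuallyEq (hf : ContDiffAt ℝ 2 f p) :
    pdv f =ᶠ[𝓝 p] fun q => fderiv ℝ f q (0, 1) :=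
  hf.eventually_differentiableAt.mono fun _ => pdv_eq_fderiv

theorem ContDiffAt.differentiableAt_fderiv (hf : ContDiffAt ℝ 2 f p) :
    DifferentiableAt ℝ (fderiv ℝ f) p :=
  (hf.fderiv_right (m := 1) (by norm_num)).differentiableAt one_ne_zero

theorem ContDiffAt.differentiableAt_pdu (hf : ContDiffAt ℝ 2 f p) :
    DifferentiableAt ℝ (pdu f) p :=
  (hf.differentiableAt_fderiv.clm_apply (differentiableAt_const _)).congr_of_eventuallyEq
    hf.pdu_eventuallyEq

theorem ContDiffAt.differentiableAt_pdv (hf : ContDiffAt ℝ 2 f p) :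
    DifferentiableAt ℝ (pdv f) p :=
  (hf.differentiableAt_fderiv.clm_apply (differentiableAt_const _)).congr_of_eventuallyEq
    hf.pdv_eventuallyEq

theorem ContDiffAt.pdu_pdv_eq_pdv_pdu (hf : ContDiffAt ℝ 2 f p) :
    pdu (pdv f) p = pdv (pdu f) p := by
  have hD := hf.differentiableAt_fderiv
  rw [pdu_eq_fderiv hf.differentiableAt_pdv, pdv_eq_fderiv hf.differentiableAt_pdu,
    hf.pdv_eventuallyEq.fderiv_eq, hf.pdu_eventuallyEq.fderiv_eq,
    fderiv_clm_apply hD (differentiableAt_const _), fderiv_clm_apply hD (differentiableAt_const _)]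
  simpa using hf.isSymmSndFDerivAt (by simp [minSmoothness_of_isRCLikeNormedField]) (1, 0) (0, 1)

end PartialDerivatives

section HawkingMass

variable {r Ω ψ : ℝ × ℝ → ℝ} {p : ℝ × ℝ}

theorem pdu_div_sq {F : ℝ × ℝ → ℝ} (hF : DifferentiableAt ℝ F p)
    (hΩ : DifferentiableAt ℝ Ω p) (hΩ0 : Ω p ≠ 0) :
    pdu (fun q => F q / Ω q ^ 2) p = pdu F p / Ω p ^ 2 - 2 * F p * pdu Ω p / Ω p ^ 3 := by
  refine ((hasDerivAt_pdu hF).div ((hasDerivAt_pdu hΩ).pow 2) (pow_ne_zero 2 hΩ0)).deriv.trans ?_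
  simp only [Pi.pow_apply, Prod.mk.eta]
  field_simp
  ring

theorem pdu_varpi (l g : ℝ) (hr : ContDiffAt ℝ 2 r p) (hΩ : DifferentiableAt ℝ Ω p)
    (hψ : DifferentiableAt ℝ ψ p) (hΩ0 : Ω p ≠ 0) :
    pdu (varpi l g r Ω ψ) p
      = (2 * (pdu (pdu r) p * pdv r p * r p + pdu r p * pdv (pdu r) p * r p
            + pdu r p * pdv r p * pdu r p) / Ω p ^ 2
          - 4 * pdu r p * pdv r p * r p * pdu Ω p / Ω p ^ 3
          + 16 * Real.pi * g * pdu r p * pdv r p * r p * ψ p * pdu ψ p / Ω p ^ 2)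
          * Real.exp (4 * Real.pi * g * ψ p ^ 2)
        + 3 * r p ^ 2 * pdu r p / (2 * l ^ 2) := by
  have hR := hasDerivAt_pdu (hr.differentiableAt two_ne_zero)
  have hRu := hasDerivAt_pdu hr.differentiableAt_pdu
  have hRv := hasDerivAt_pdu hr.differentiableAt_pdv
  rw [hr.pdu_pdv_eq_pdv_pdu] at hRv
  have hexp := (((hasDerivAt_pdu hψ).pow 2).const_mul (4 * Real.pi * g)).exp
  refine (((((hRu.const_mul 2).mul hRv).mul hR).div ((hasDerivAt_pdu hΩ).pow 2)
    (pow_ne_zero 2 hΩ0)).mul hexp |>.add ((hR.pow 3).div_const (2 * l ^ 2))).deriv.trans ?_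
  simp only [Pi.mul_apply, Pi.div_apply, Pi.pow_apply, Prod.mk.eta]
  field_simp
  ring

theorem pdu_varpi_of_EKG {l a g : ℝ} (hr : ContDiffAt ℝ 2 r p) (hΩ : DifferentiableAt ℝ Ω p)
    (hψ : DifferentiableAt ℝ ψ p) (hr0 : r p ≠ 0) (hΩ0 : Ω p ≠ 0)
    (hEKG1 : pdu (fun q => pdu r q / (Ω q) ^ 2) p
        = -(4 * Real.pi) * r p * (pdu ψ p) ^ 2 / (Ω p) ^ 2)
    (hEKG3 : pdv (pdu r) p = -(pdu r p * pdv r p) / r p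
        + (2 * Real.pi * a * r p / l ^ 2) * (Ω p) ^ 2 * (ψ p) ^ 2
        - (3 / 4) * (r p / l ^ 2) * (Ω p) ^ 2) :
    pdu (varpi l g r Ω ψ) p
      = -(8 * Real.pi * (r p) ^ 2 * pdv r p / (Ω p) ^ 2)
            * (pdu ψ p - g * (pdu r p / r p) * ψ p) ^ 2
            * Real.exp (4 * Real.pi * g * (ψ p) ^ 2)
        + (4 * Real.pi * g ^ 2 * pdu r p / r p) * varpi l g r Ω ψ p * (ψ p) ^ 2
        + (pdu r p * (r p) ^ 2 / l ^ 2) * fKG a g ((ψ p) ^ 2) := by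
  rw [pdu_div_sq hr.differentiableAt_pdu hΩ hΩ0] at hEKG1
  have hruu :
      pdu (pdu r) p = -(4 * Real.pi) * r p * pdu ψ p ^ 2 + 2 * pdu r p * pdu Ω p / Ω p := by
    field_simp at hEKG1 ⊢
    linear_combination hEKG1
  rw [pdu_varpi l g hr hΩ hψ hΩ0, hruu, hEKG3, varpi, fKG]
  field_simp
  ring

theorem varpi_comp_swap (l g : ℝ) :
    varpi l g (r ∘ Prod.swap) (Ω ∘ Prod.swap) (ψ ∘ Prod.swap) = varpi l g r Ω ψ ∘ Prod.swap := by
  funext q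
  simp only [varpi, pdu_comp_swap, pdv_comp_swap, Function.comp_apply]
  ring

theorem pdv_varpi_of_EKG {l a g : ℝ} (hr : ContDiffAt ℝ 2 r p) (hΩ : DifferentiableAt ℝ Ω p)
    (hψ : DifferentiableAt ℝ ψ p) (hr0 : r p ≠ 0) (hΩ0 : Ω p ≠ 0)
    (hEKG2 : pdv (fun q => pdv r q / (Ω q) ^ 2) p
        = -(4 * Real.pi) * r p * (pdv ψ p) ^ 2 / (Ω p) ^ 2)
    (hEKG3 : pdv (pdu r) p = -(pdu r p * pdv r p) / r p
        + (2 * Real.pi * a * r p / l ^ 2) * (Ω p) ^ 2 * (ψ p) ^ 2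
        - (3 / 4) * (r p / l ^ 2) * (Ω p) ^ 2) :
    pdv (varpi l g r Ω ψ) p
      = -(8 * Real.pi * (r p) ^ 2 * pdu r p / (Ω p) ^ 2)
            * (pdv ψ p - g * (pdv r p / r p) * ψ p) ^ 2
            * Real.exp (4 * Real.pi * g * (ψ p) ^ 2)
        + (4 * Real.pi * g ^ 2 * pdv r p / r p) * varpi l g r Ω ψ p * (ψ p) ^ 2
        + (pdv r p * (r p) ^ 2 / l ^ 2) * fKG a g ((ψ p) ^ 2) := by
  have hswap : ContDiff ℝ 2 (Prod.swap : ℝ × ℝ → ℝ × ℝ) := contDiff_snd.prodMk contDiff_fst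
  have h := pdu_varpi_of_EKG (r := r ∘ Prod.swap) (Ω := Ω ∘ Prod.swap) (ψ := ψ ∘ Prod.swap)
    (p := p.swap) (l := l) (a := a) (g := g) (hr.comp _ hswap.contDiffAt)
    (hΩ.comp _ (hswap.differentiable two_ne_zero _)) (hψ.comp _ (hswap.differentiable two_ne_zero _))
    hr0 hΩ0 hEKG2 ?_
  · rwa [varpi_comp_swap, pdu_comp_swap] at h
  · simp only [pdu_comp_swap, pdv_comp_swap, Function.comp_apply, Prod.swap_swap]
    rw [hr.pdu_pdv_eq_pdv_pdu, hEKG3]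
    ring

end HawkingMass

theorem stmt_4_general (U : Set (ℝ × ℝ)) (hU : IsOpen U)
    (r Ω ψ : ℝ × ℝ → ℝ)
    (l a g : ℝ)
    (hrC : ContDiffOn ℝ 2 r U) (hΩC : ContDiffOn ℝ 2 Ω U) (hψC : ContDiffOn ℝ 2 ψ U)
    (hrpos : ∀ p ∈ U, 0 < r p) (hΩpos : ∀ p ∈ U, 0 < Ω p)
    (hEKG1 : ∀ p ∈ U, pdu (fun q => pdu r q / (Ω q) ^ 2) p
        = -(4 * Real.pi) * r p * (pdu ψ p) ^ 2 / (Ω p) ^ 2)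
    (hEKG2 : ∀ p ∈ U, pdv (fun q => pdv r q / (Ω q) ^ 2) p
        = -(4 * Real.pi) * r p * (pdv ψ p) ^ 2 / (Ω p) ^ 2)
    (hEKG3 : ∀ p ∈ U, pdv (pdu r) p = -(pdu r p * pdv r p) / r p
        + (2 * Real.pi * a * r p / l ^ 2) * (Ω p) ^ 2 * (ψ p) ^ 2
        - (3 / 4) * (r p / l ^ 2) * (Ω p) ^ 2) :
    ∀ p ∈ U,
      pdu (varpi l g r Ω ψ) p
        = -(8 * Real.pi * (r p) ^ 2 * pdv r p / (Ω p) ^ 2)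
              * (pdu ψ p - g * (pdu r p / r p) * ψ p) ^ 2
              * Real.exp (4 * Real.pi * g * (ψ p) ^ 2)
          + (4 * Real.pi * g ^ 2 * pdu r p / r p) * varpi l g r Ω ψ p * (ψ p) ^ 2
          + (pdu r p * (r p) ^ 2 / l ^ 2) * fKG a g ((ψ p) ^ 2)
      ∧
      pdv (varpi l g r Ω ψ) p
        = -(8 * Real.pi * (r p) ^ 2 * pdu r p / (Ω p) ^ 2)
              * (pdv ψ p - g * (pdv r p / r p) * ψ p) ^ 2
              * Real.exp (4 * Real.pi * g * (ψ p) ^ 2)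
          + (4 * Real.pi * g ^ 2 * pdv r p / r p) * varpi l g r Ω ψ p * (ψ p) ^ 2
          + (pdv r p * (r p) ^ 2 / l ^ 2) * fKG a g ((ψ p) ^ 2) := by
  intro p hp
  have hr := hrC.contDiffAt (hU.mem_nhds hp)
  have hΩ := (hΩC.contDiffAt (hU.mem_nhds hp)).differentiableAt two_ne_zero
  have hψ := (hψC.contDiffAt (hU.mem_nhds hp)).differentiableAt two_ne_zero
  have hr0 := (hrpos p hp).ne'
  have hΩ0 := (hΩpos p hp).ne'
  exact ⟨pdu_varpi_of_EKG hr hΩ hψ hr0 hΩ0 (hEKG1 p hp) (hEKG3 p hp),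
    pdv_varpi_of_EKG hr hΩ hψ hr0 hΩ0 (hEKG2 p hp) (hEKG3 p hp)⟩

/-- If `r, Ω, ψ` satisfy the toroidally symmetric Einstein–Klein-Gordon system
(EKG1)–(EKG5) on an open set `U`, then the final renormalised Hawking mass satisfies
`∂ᵤϖ = −(8πr²rᵥ/Ω²)(∇̃ᵤψ)²e^{4πgψ²} + (4πg²rᵤ/r)ϖψ² + (rᵤr²/l²)f(ψ²)` and the
symmetric equation in `v`, where `∇̃ᵤψ = ψᵤ − g(rᵤ/r)ψ`, `∇̃ᵥψ = ψᵥ − g(rᵥ/r)ψ`. -/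
theorem stmt_4 (U : Set (ℝ × ℝ)) (hU : IsOpen U)
    (r Ω ψ : ℝ × ℝ → ℝ)
    (l κ a g : ℝ) (hl : 0 < l) (hκ : κ ∈ Set.Ioo (0 : ℝ) 1)
    (ha : a = κ ^ 2 / 2 - 9 / 8) (hg : g = -3 / 2 + κ)
    (hrC : ContDiffOn ℝ 2 r U) (hΩC : ContDiffOn ℝ 2 Ω U) (hψC : ContDiffOn ℝ 2 ψ U)
    (hrpos : ∀ p ∈ U, 0 < r p) (hΩpos : ∀ p ∈ U, 0 < Ω p)
    (hEKG1 : ∀ p ∈ U, pdu (fun q => pdu r q / (Ω q) ^ 2) p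
        = -(4 * Real.pi) * r p * (pdu ψ p) ^ 2 / (Ω p) ^ 2)
    (hEKG2 : ∀ p ∈ U, pdv (fun q => pdv r q / (Ω q) ^ 2) p
        = -(4 * Real.pi) * r p * (pdv ψ p) ^ 2 / (Ω p) ^ 2)
    (hEKG3 : ∀ p ∈ U, pdv (pdu r) p = -(pdu r p * pdv r p) / r p
        + (2 * Real.pi * a * r p / l ^ 2) * (Ω p) ^ 2 * (ψ p) ^ 2
        - (3 / 4) * (r p / l ^ 2) * (Ω p) ^ 2)
    (hEKG4 : ∀ p ∈ U, pdv (pdu (fun q => Real.log (Ω q))) p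
        = -(4 * Real.pi) * pdu ψ p * pdv ψ p + (pdu r p * pdv r p) / (r p) ^ 2)
    (hEKG5 : ∀ p ∈ U, pdv (pdu ψ) p = -(pdu r p / r p) * pdv ψ p
        - (pdv r p / r p) * pdu ψ p - ((Ω p) ^ 2 * a / (2 * l ^ 2)) * ψ p) :
    ∀ p ∈ U,
      pdu (varpi l g r Ω ψ) p
        = -(8 * Real.pi * (r p) ^ 2 * pdv r p / (Ω p) ^ 2)
              * (pdu ψ p - g * (pdu r p / r p) * ψ p) ^ 2
              * Real.exp (4 * Real.pi * g * (ψ p) ^ 2)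
          + (4 * Real.pi * g ^ 2 * pdu r p / r p) * varpi l g r Ω ψ p * (ψ p) ^ 2
          + (pdu r p * (r p) ^ 2 / l ^ 2) * fKG a g ((ψ p) ^ 2)
      ∧
      pdv (varpi l g r Ω ψ) p
        = -(8 * Real.pi * (r p) ^ 2 * pdu r p / (Ω p) ^ 2)
              * (pdv ψ p - g * (pdv r p / r p) * ψ p) ^ 2
              * Real.exp (4 * Real.pi * g * (ψ p) ^ 2)
          + (4 * Real.pi * g ^ 2 * pdv r p / r p) * varpi l g r Ω ψ p * (ψ p) ^ 2
          + (pdv r p * (r p) ^ 2 / l ^ 2) * fKG a g ((ψ p) ^ 2) :=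
  stmt_4_general U hU r Ω ψ l a g hrC hΩC hψC hrpos hΩpos hEKG1 hEKG2 hEKG3
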